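/- Let X, Y₁, S₁, Y₂, S₂ be discrete random variables on a finite probability space such that X → (Y₁,S₁) → (Y₂,S₂) forms a Markov chain (physical degradation) and X is independent of (S₁,S₂). Then [I(X;Y₁|S₁) − I(X;Y₂|S₂)]⁺ + H(Y₁|Y₂,S₂,X) = H(Y₁,S₁|Y₂,S₂) − H(S₁|Y₁,Y₂,S₂,X). -/

import Mathlib

open Finset

/-- Probability that a discrete random variable `X` takes value `x`,
under the probability mass function `μ` on a finite sample space. -/
noncomputable def prob {Ω α : Type*} [Fintype Ω] [DecidableEq α]
    (μ : Ω → ℝ) (X : Ω → α) (x : α) : ℝ :=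
  ∑ ω ∈ Finset.univ.filter (fun ω => X ω = x), μ ω

/-- `μ` is a probability mass function on the finite sample space `Ω`. -/
def IsPMF {Ω : Type*} [Fintype Ω] (μ : Ω → ℝ) : Prop :=
  (∀ ω, 0 ≤ μ ω) ∧ ∑ ω, μ ω = 1

/-- Shannon entropy (natural log) of a discrete random variable. -/
noncomputable def entH {Ω α : Type*} [Fintype Ω] [Fintype α] [DecidableEq α]
    (μ : Ω → ℝ) (X : Ω → α) : ℝ :=
  ∑ x, -(prob μ X x * Real.log (prob μ X x))

/-- Conditional Shannon entropy `H(X | Y)`. -/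
noncomputable def condH {Ω α β : Type*} [Fintype Ω] [Fintype α] [DecidableEq α]
    [Fintype β] [DecidableEq β] (μ : Ω → ℝ) (X : Ω → α) (Y : Ω → β) : ℝ :=
  entH μ (fun ω => (X ω, Y ω)) - entH μ Y

/-- Mutual information `I(X; Y)`. -/
noncomputable def mutInfo {Ω α β : Type*} [Fintype Ω] [Fintype α] [DecidableEq α]
    [Fintype β] [DecidableEq β] (μ : Ω → ℝ) (X : Ω → α) (Y : Ω → β) : ℝ :=
  entH μ X + entH μ Y - entH μ (fun ω => (X ω, Y ω))

/-- Conditional mutual information `I(X; Y | Z)`. -/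
noncomputable def condMutInfo {Ω α β γ : Type*} [Fintype Ω] [Fintype α] [DecidableEq α]
    [Fintype β] [DecidableEq β] [Fintype γ] [DecidableEq γ]
    (μ : Ω → ℝ) (X : Ω → α) (Y : Ω → β) (Z : Ω → γ) : ℝ :=
  condH μ X Z + condH μ Y Z - condH μ (fun ω => (X ω, Y ω)) Z

/-- `X` and `Y` are independent random variables under `μ`. -/
def IndepRV {Ω α β : Type*} [Fintype Ω] [DecidableEq α] [DecidableEq β]
    (μ : Ω → ℝ) (X : Ω → α) (Y : Ω → β) : Prop :=
  ∀ x y, prob μ (fun ω => (X ω, Y ω)) (x, y) = prob μ X x * prob μ Y y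

/-- `A → B → C` forms a Markov chain under `μ`:
`P(A,B,C) P(B) = P(A,B) P(B,C)` pointwise. -/
def MarkovChain {Ω α β γ : Type*} [Fintype Ω] [DecidableEq α] [DecidableEq β] [DecidableEq γ]
    (μ : Ω → ℝ) (A : Ω → α) (B : Ω → β) (C : Ω → γ) : Prop :=
  ∀ a b c, prob μ (fun ω => (A ω, B ω, C ω)) (a, b, c) * prob μ B b
    = prob μ (fun ω => (A ω, B ω)) (a, b) * prob μ (fun ω => (B ω, C ω)) (b, c)

/-- Binary entropy function (natural log). -/
noncomputable def binEnt (x : ℝ) : ℝ :=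
  -(x * Real.log x) - ((1 - x) * Real.log (1 - x))

section Lemmas
variable {Ω α β γ : Type*} [Fintype Ω]

lemma prob_nonneg [DecidableEq α] (μ : Ω → ℝ) (hμ : ∀ ω, 0 ≤ μ ω) (X : Ω → α) (x : α) :
    0 ≤ prob μ X x :=
  Finset.sum_nonneg fun ω _ => hμ ω

lemma sum_prob [Fintype α] [DecidableEq α] (μ : Ω → ℝ) (X : Ω → α) :
    ∑ x, prob μ X x = ∑ ω, μ ω := by
  unfold prob
  exact Finset.sum_fiberwise_of_maps_to (fun ω _ => Finset.mem_univ (X ω)) μ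

lemma prob_comp_inj [DecidableEq α] [DecidableEq β] (μ : Ω → ℝ) {f : α → β}
    (hf : Function.Injective f) (X : Ω → α) (x : α) :
    prob μ (fun ω => f (X ω)) (f x) = prob μ X x := by
  unfold prob
  congr 1
  ext ω
  simp [hf.eq_iff]

lemma prob_comp_not_range [DecidableEq α] [DecidableEq β] (μ : Ω → ℝ) {f : α → β}
    (X : Ω → α) {y : β} (hy : ∀ x, f x ≠ y) :
    prob μ (fun ω => f (X ω)) y = 0 := by
  unfold prob
  rw [Finset.sum_eq_zero]
  intro ω hω
  simp only [Finset.mem_filter] at hω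
  exact absurd hω.2 (hy (X ω))

lemma entH_comp_inj [Fintype α] [DecidableEq α] [Fintype β] [DecidableEq β]
    (μ : Ω → ℝ) {f : α → β} (hf : Function.Injective f) (X : Ω → α) :
    entH μ (fun ω => f (X ω)) = entH μ X := by
  unfold entH
  rw [← Finset.sum_subset (Finset.subset_univ (Finset.univ.image f))
      (fun y _ hy => by
        have : ∀ x, f x ≠ y := fun x hx =>
          hy (Finset.mem_image.mpr ⟨x, Finset.mem_univ x, hx⟩)
        rw [prob_comp_not_range μ X this]; simp),
    Finset.sum_image (fun a _ b _ h => hf h)]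
  exact Finset.sum_congr rfl fun x _ => by rw [prob_comp_inj μ hf X x]

lemma marginal_fst [DecidableEq α] [Fintype β] [DecidableEq β] (μ : Ω → ℝ)
    (X : Ω → α) (Y : Ω → β) (x : α) :
    ∑ y, prob μ (fun ω => (X ω, Y ω)) (x, y) = prob μ X x := by
  unfold prob
  rw [← Finset.sum_fiberwise_of_maps_to (g := Y) (t := Finset.univ)
      (fun ω _ => Finset.mem_univ (Y ω)) μ]
  apply Finset.sum_congr rfl
  intro y _
  congr 1
  ext ω
  simp [Prod.ext_iff, and_comm]

lemma marginal_snd [Fintype α] [DecidableEq α] [DecidableEq β] (μ : Ω → ℝ)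
    (X : Ω → α) (Y : Ω → β) (y : β) :
    ∑ x, prob μ (fun ω => (X ω, Y ω)) (x, y) = prob μ Y y := by
  unfold prob
  rw [← Finset.sum_fiberwise_of_maps_to (g := X) (t := Finset.univ)
      (fun ω _ => Finset.mem_univ (X ω)) μ]
  apply Finset.sum_congr rfl
  intro x _
  congr 1
  ext ω
  simp [Prod.ext_iff, and_comm]

end Lemmas

section Lemmas2
variable {Ω α β γ : Type*} [Fintype Ω]

example (s : Finset α) (f : α → ℝ) : ∑ x ∈ s, -f x = -∑ x ∈ s, f x :=
  Finset.sum_neg_distrib f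

lemma pull_neg_mul (s : Finset α) (g : α → ℝ) (L : ℝ) :
    ∑ i ∈ s, -(g i * L) = -((∑ i ∈ s, g i) * L) := by
  rw [Finset.sum_mul, ← Finset.sum_neg_distrib]

-- marginal over the middle coordinate of a triple
lemma marginal_mid [DecidableEq α] [Fintype β] [DecidableEq β] [DecidableEq γ]
    (μ : Ω → ℝ) (A : Ω → α) (B : Ω → β) (C : Ω → γ) (a : α) (c : γ) :
    prob μ (fun ω => (A ω, C ω)) (a, c)
      = ∑ b, prob μ (fun ω => (A ω, B ω, C ω)) (a, b, c) := by
  have hf : Function.Injective (fun p : α × β × γ => ((p.1, p.2.2), p.2.1)) := by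
    rintro ⟨a, b, c⟩ ⟨a', b', c'⟩ h
    simp only [Prod.mk.injEq] at h
    simp [h.1.1, h.1.2, h.2]
  rw [← marginal_fst μ (fun ω => (A ω, C ω)) B (a, c)]
  exact Finset.sum_congr rfl fun b _ => by
    simpa using prob_comp_inj μ hf (fun ω => (A ω, B ω, C ω)) (a, b, c)

lemma marginal_head [DecidableEq α] [Fintype β] [DecidableEq β]
    (μ : Ω → ℝ) (A : Ω → α) (B : Ω → β) (a : α) :
    prob μ A a = ∑ b, prob μ (fun ω => (A ω, B ω)) (a, b) :=
  (marginal_fst μ A B a).symm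

lemma marginal_tail [Fintype α] [DecidableEq α] [DecidableEq β]
    (μ : Ω → ℝ) (A : Ω → α) (B : Ω → β) (b : β) :
    prob μ B b = ∑ a, prob μ (fun ω => (A ω, B ω)) (a, b) :=
  (marginal_snd μ A B b).symm

lemma prob_le_of_marginal {s : Finset α} {g : α → ℝ} (hg : ∀ i ∈ s, 0 ≤ g i)
    {i : α} (hi : i ∈ s) {m : ℝ} (hm : m = ∑ j ∈ s, g j) : g i ≤ m := by
  subst hm; exact Finset.single_le_sum hg hi

-- independence of X with each component of a pair
lemma indep_fst [DecidableEq α] [DecidableEq β] [Fintype γ] [DecidableEq γ]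
    (μ : Ω → ℝ) (X : Ω → α) (S : Ω → β) (T : Ω → γ)
    (h : IndepRV μ X (fun ω => (S ω, T ω))) : IndepRV μ X S := by
  intro x s
  have hf : Function.Injective (fun p : α × β × γ => ((p.1, p.2.1), p.2.2)) := by
    rintro ⟨a, b, c⟩ ⟨a', b', c'⟩ hh
    simp only [Prod.mk.injEq] at hh
    simp [hh.1.1, hh.1.2, hh.2]
  rw [← marginal_fst μ (fun ω => (X ω, S ω)) T (x, s)]
  have : ∀ t, prob μ (fun ω => ((X ω, S ω), T ω)) ((x, s), t)
      = prob μ X x * prob μ (fun ω => (S ω, T ω)) (s, t) := by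
    intro t
    rw [show (fun ω => ((X ω, S ω), T ω))
        = (fun ω => (fun p : α × β × γ => ((p.1, p.2.1), p.2.2)) (X ω, S ω, T ω)) from rfl]
    rw [show ((x, s), t) = (fun p : α × β × γ => ((p.1, p.2.1), p.2.2)) (x, s, t) from rfl]
    rw [prob_comp_inj μ hf (fun ω => (X ω, S ω, T ω)) (x, s, t)]
    exact h x (s, t)
  rw [Finset.sum_congr rfl fun t _ => this t, ← Finset.mul_sum,
    marginal_fst μ S T s]

lemma indep_snd [DecidableEq α] [Fintype β] [DecidableEq β] [DecidableEq γ]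
    (μ : Ω → ℝ) (X : Ω → α) (S : Ω → β) (T : Ω → γ)
    (h : IndepRV μ X (fun ω => (S ω, T ω))) : IndepRV μ X T := by
  intro x t
  have hf : Function.Injective (fun p : α × β × γ => ((p.1, p.2.2), p.2.1)) := by
    rintro ⟨a, b, c⟩ ⟨a', b', c'⟩ hh
    simp only [Prod.mk.injEq] at hh
    simp [hh.1.1, hh.1.2, hh.2]
  rw [← marginal_fst μ (fun ω => (X ω, T ω)) S (x, t)]
  have : ∀ s, prob μ (fun ω => ((X ω, T ω), S ω)) ((x, t), s)
      = prob μ X x * prob μ (fun ω => (S ω, T ω)) (s, t) := by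
    intro s
    rw [show (fun ω => ((X ω, T ω), S ω))
        = (fun ω => (fun p : α × β × γ => ((p.1, p.2.2), p.2.1)) (X ω, S ω, T ω)) from rfl]
    rw [show ((x, t), s) = (fun p : α × β × γ => ((p.1, p.2.2), p.2.1)) (x, s, t) from rfl]
    rw [prob_comp_inj μ hf (fun ω => (X ω, S ω, T ω)) (x, s, t)]
    exact h x (s, t)
  rw [Finset.sum_congr rfl fun s _ => this s, ← Finset.mul_sum,
    marginal_snd μ S T t]

lemma entH_pair_of_indep [Fintype α] [DecidableEq α] [Fintype β] [DecidableEq β]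
    (μ : Ω → ℝ) (hμ : IsPMF μ) (X : Ω → α) (Y : Ω → β) (h : IndepRV μ X Y) :
    entH μ (fun ω => (X ω, Y ω)) = entH μ X + entH μ Y := by
  have hsX : ∑ x, prob μ X x = 1 := (sum_prob μ X).trans hμ.2
  have hsY : ∑ y, prob μ Y y = 1 := (sum_prob μ Y).trans hμ.2
  unfold entH
  rw [Fintype.sum_prod_type]
  have key : ∀ x y, -(prob μ (fun ω => (X ω, Y ω)) (x, y)
        * Real.log (prob μ (fun ω => (X ω, Y ω)) (x, y)))
      = -(prob μ X x * Real.log (prob μ X x)) * prob μ Y y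
        + prob μ X x * -(prob μ Y y * Real.log (prob μ Y y)) := by
    intro x y
    rw [h x y]
    by_cases hx : prob μ X x = 0
    · simp [hx]
    by_cases hy : prob μ Y y = 0
    · simp [hy]
    rw [Real.log_mul hx hy]
    ring
  calc ∑ x, ∑ y, -(prob μ (fun ω => (X ω, Y ω)) (x, y)
        * Real.log (prob μ (fun ω => (X ω, Y ω)) (x, y)))
      = ∑ x, ∑ y, (-(prob μ X x * Real.log (prob μ X x)) * prob μ Y y
        + prob μ X x * -(prob μ Y y * Real.log (prob μ Y y))) := by
        exact Finset.sum_congr rfl fun x _ => Finset.sum_congr rfl fun y _ => key x y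
    _ = ∑ x, (-(prob μ X x * Real.log (prob μ X x)) * ∑ y, prob μ Y y
        + prob μ X x * ∑ y, -(prob μ Y y * Real.log (prob μ Y y))) := by
        exact Finset.sum_congr rfl fun x _ => by
          rw [Finset.sum_add_distrib, ← Finset.mul_sum, ← Finset.mul_sum]
    _ = _ := by
        rw [Finset.sum_add_distrib, ← Finset.sum_mul, ← Finset.sum_mul, hsX, hsY]
        ring

end Lemmas2

section Lemmas3
variable {Ω α β γ : Type*} [Fintype Ω]
  [Fintype α] [DecidableEq α] [Fintype β] [DecidableEq β] [Fintype γ] [DecidableEq γ]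

lemma marginal_last (μ : Ω → ℝ) (A : Ω → α) (B : Ω → β) (C : Ω → γ) (a : α) (b : β) :
    prob μ (fun ω => (A ω, B ω)) (a, b)
      = ∑ c, prob μ (fun ω => (A ω, B ω, C ω)) (a, b, c) := by
  have hf : Function.Injective (fun p : α × β × γ => ((p.1, p.2.1), p.2.2)) := by
    rintro ⟨a, b, c⟩ ⟨a', b', c'⟩ hh
    simp only [Prod.mk.injEq] at hh
    simp [hh.1.1, hh.1.2, hh.2]
  rw [← marginal_fst μ (fun ω => (A ω, B ω)) C (a, b)]
  exact Finset.sum_congr rfl fun c _ => by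
    simpa using prob_comp_inj μ hf (fun ω => (A ω, B ω, C ω)) (a, b, c)

lemma entH_triple_expand (μ : Ω → ℝ) (A : Ω → α) (B : Ω → β) (C : Ω → γ) :
    entH μ (fun ω => (A ω, B ω, C ω))
      = ∑ a, ∑ b, ∑ c, -(prob μ (fun ω => (A ω, B ω, C ω)) (a, b, c)
          * Real.log (prob μ (fun ω => (A ω, B ω, C ω)) (a, b, c))) := by
  unfold entH
  rw [Fintype.sum_prod_type]
  exact Finset.sum_congr rfl fun a _ => Fintype.sum_prod_type ..

lemma entH_pair_expand (μ : Ω → ℝ) (A : Ω → α) (B : Ω → β) :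
    entH μ (fun ω => (A ω, B ω))
      = ∑ a, ∑ b, -(prob μ (fun ω => (A ω, B ω)) (a, b)
          * Real.log (prob μ (fun ω => (A ω, B ω)) (a, b))) := by
  unfold entH
  exact Fintype.sum_prod_type ..

lemma entH_markov (μ : Ω → ℝ) (hμ : IsPMF μ) (A : Ω → α) (B : Ω → β) (C : Ω → γ)
    (h : MarkovChain μ A B C) :
    entH μ (fun ω => (A ω, B ω, C ω))
      = entH μ (fun ω => (A ω, B ω)) + entH μ (fun ω => (B ω, C ω)) - entH μ B := by
  have hp : ∀ a b c, 0 ≤ prob μ (fun ω => (A ω, B ω, C ω)) (a, b, c) :=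
    fun a b c => prob_nonneg μ hμ.1 _ _
  have mAB : ∀ a b, prob μ (fun ω => (A ω, B ω)) (a, b)
      = ∑ c, prob μ (fun ω => (A ω, B ω, C ω)) (a, b, c) := marginal_last μ A B C
  have mBC : ∀ b c, prob μ (fun ω => (B ω, C ω)) (b, c)
      = ∑ a, prob μ (fun ω => (A ω, B ω, C ω)) (a, b, c) :=
    fun b c => marginal_tail μ A (fun ω => (B ω, C ω)) (b, c)
  have mB : ∀ b, prob μ B b = ∑ a, prob μ (fun ω => (A ω, B ω)) (a, b) :=
    fun b => marginal_tail μ A B b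
  have key : ∀ a b c, -(prob μ (fun ω => (A ω, B ω, C ω)) (a, b, c)
        * Real.log (prob μ (fun ω => (A ω, B ω, C ω)) (a, b, c)))
      = -(prob μ (fun ω => (A ω, B ω, C ω)) (a, b, c)
          * Real.log (prob μ (fun ω => (A ω, B ω)) (a, b)))
        + -(prob μ (fun ω => (A ω, B ω, C ω)) (a, b, c)
          * Real.log (prob μ (fun ω => (B ω, C ω)) (b, c)))
        + prob μ (fun ω => (A ω, B ω, C ω)) (a, b, c) * Real.log (prob μ B b) := by
    intro a b c
    by_cases h0 : prob μ (fun ω => (A ω, B ω, C ω)) (a, b, c) = 0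
    · simp [h0]
    have hpos : 0 < prob μ (fun ω => (A ω, B ω, C ω)) (a, b, c) :=
      lt_of_le_of_ne (hp a b c) (Ne.symm h0)
    have hAB : 0 < prob μ (fun ω => (A ω, B ω)) (a, b) :=
      lt_of_lt_of_le hpos (prob_le_of_marginal (fun c _ => hp a b c)
        (Finset.mem_univ c) (mAB a b))
    have hBC : 0 < prob μ (fun ω => (B ω, C ω)) (b, c) :=
      lt_of_lt_of_le hpos (prob_le_of_marginal (fun a _ => hp a b c)
        (Finset.mem_univ a) (mBC b c))
    have hB : 0 < prob μ B b :=
      lt_of_lt_of_le hAB (prob_le_of_marginal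
        (g := fun a' => prob μ (fun ω => (A ω, B ω)) (a', b))
        (fun a' _ => prob_nonneg μ hμ.1 _ _) (Finset.mem_univ a) (mB b))
    have hlog : Real.log (prob μ (fun ω => (A ω, B ω, C ω)) (a, b, c))
          + Real.log (prob μ B b)
        = Real.log (prob μ (fun ω => (A ω, B ω)) (a, b))
          + Real.log (prob μ (fun ω => (B ω, C ω)) (b, c)) := by
      rw [← Real.log_mul hpos.ne' hB.ne', h a b c, Real.log_mul hAB.ne' hBC.ne']
    linear_combination (-(prob μ (fun ω => (A ω, B ω, C ω)) (a, b, c))) * hlog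
  rw [entH_triple_expand, entH_pair_expand μ A B, entH_pair_expand μ B C]
  calc
    ∑ a, ∑ b, ∑ c, -(prob μ (fun ω => (A ω, B ω, C ω)) (a, b, c)
        * Real.log (prob μ (fun ω => (A ω, B ω, C ω)) (a, b, c)))
      = (∑ a, ∑ b, ∑ c, -(prob μ (fun ω => (A ω, B ω, C ω)) (a, b, c)
          * Real.log (prob μ (fun ω => (A ω, B ω)) (a, b))))
        + (∑ a, ∑ b, ∑ c, -(prob μ (fun ω => (A ω, B ω, C ω)) (a, b, c)
          * Real.log (prob μ (fun ω => (B ω, C ω)) (b, c))))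
        + ∑ a, ∑ b, ∑ c, prob μ (fun ω => (A ω, B ω, C ω)) (a, b, c)
          * Real.log (prob μ B b) := by
        simp only [key, Finset.sum_add_distrib]
    _ = (∑ a, ∑ b, -(prob μ (fun ω => (A ω, B ω)) (a, b)
          * Real.log (prob μ (fun ω => (A ω, B ω)) (a, b))))
        + (∑ b, ∑ c, -(prob μ (fun ω => (B ω, C ω)) (b, c)
          * Real.log (prob μ (fun ω => (B ω, C ω)) (b, c))))
        + ∑ b, prob μ B b * Real.log (prob μ B b) := by
        congr 1
        congr 1
        · exact Finset.sum_congr rfl fun a _ => Finset.sum_congr rfl fun b _ => by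
            rw [pull_neg_mul, ← mAB]
        · rw [Finset.sum_comm]
          refine Finset.sum_congr rfl fun b _ => ?_
          rw [Finset.sum_comm]
          refine Finset.sum_congr rfl fun c _ => ?_
          rw [pull_neg_mul, ← mBC]
        · rw [Finset.sum_comm]
          refine Finset.sum_congr rfl fun b _ => ?_
          have : ∀ a, ∑ c, prob μ (fun ω => (A ω, B ω, C ω)) (a, b, c)
              * Real.log (prob μ B b)
              = prob μ (fun ω => (A ω, B ω)) (a, b) * Real.log (prob μ B b) := by
            intro a
            rw [← Finset.sum_mul, ← mAB]
          rw [Finset.sum_congr rfl fun a _ => this a, ← Finset.sum_mul, ← mB]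
    _ = _ := by
        have hB : entH μ B = ∑ b, -(prob μ B b * Real.log (prob μ B b)) := rfl
        rw [hB]
        simp only [Finset.sum_neg_distrib]
        ring

end Lemmas3

section Lemmas4
variable {Ω α β γ : Type*} [Fintype Ω]
  [Fintype α] [DecidableEq α] [Fintype β] [DecidableEq β] [Fintype γ] [DecidableEq γ]

lemma sum_triple_prob (μ : Ω → ℝ) (hμ : IsPMF μ) (A : Ω → α) (B : Ω → β) (C : Ω → γ) :
    ∑ a, ∑ b, ∑ c, prob μ (fun ω => (A ω, B ω, C ω)) (a, b, c) = 1 := by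
  have h2 := (sum_prob μ (fun ω => (A ω, B ω, C ω))).trans hμ.2
  rw [Fintype.sum_prod_type] at h2
  rw [← h2]
  exact Finset.sum_congr rfl fun a _ =>
    (Fintype.sum_prod_type
      (f := fun bc : β × γ => prob μ (fun ω => (A ω, B ω, C ω)) (a, bc.1, bc.2))).symm

lemma condMutInfo_nonneg (μ : Ω → ℝ) (hμ : IsPMF μ) (A : Ω → α) (B : Ω → β) (C : Ω → γ) :
    0 ≤ condMutInfo μ A B C := by
  classical
  have hp : ∀ a b c, 0 ≤ prob μ (fun ω => (A ω, B ω, C ω)) (a, b, c) :=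
    fun a b c => prob_nonneg μ hμ.1 _ _
  have hpAC : ∀ a c, 0 ≤ prob μ (fun ω => (A ω, C ω)) (a, c) :=
    fun a c => prob_nonneg μ hμ.1 _ _
  have hpBC : ∀ b c, 0 ≤ prob μ (fun ω => (B ω, C ω)) (b, c) :=
    fun b c => prob_nonneg μ hμ.1 _ _
  have hpC : ∀ c, 0 ≤ prob μ C c := fun c => prob_nonneg μ hμ.1 _ _
  have mAC : ∀ a c, prob μ (fun ω => (A ω, C ω)) (a, c)
      = ∑ b, prob μ (fun ω => (A ω, B ω, C ω)) (a, b, c) :=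
    fun a c => marginal_mid μ A B C a c
  have mBC : ∀ b c, prob μ (fun ω => (B ω, C ω)) (b, c)
      = ∑ a, prob μ (fun ω => (A ω, B ω, C ω)) (a, b, c) :=
    fun b c => marginal_tail μ A (fun ω => (B ω, C ω)) (b, c)
  have mCa : ∀ c, prob μ C c = ∑ a, prob μ (fun ω => (A ω, C ω)) (a, c) :=
    fun c => marginal_tail μ A C c
  have mCb : ∀ c, prob μ C c = ∑ b, prob μ (fun ω => (B ω, C ω)) (b, c) :=
    fun c => marginal_tail μ B C c
  set q : α → β → γ → ℝ := fun a b c =>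
    if prob μ C c = 0 then 0
    else prob μ (fun ω => (A ω, C ω)) (a, c) * prob μ (fun ω => (B ω, C ω)) (b, c)
      / prob μ C c with hq
  have hq0 : ∀ a b c, 0 ≤ q a b c := by
    intro a b c
    rw [hq]
    dsimp only
    split
    · exact le_refl 0
    · exact div_nonneg (mul_nonneg (hpAC a c) (hpBC b c)) (hpC c)
  have hqsum : ∑ a, ∑ b, ∑ c, q a b c ≤ 1 := by
    have reorder : ∑ a, ∑ b, ∑ c, q a b c = ∑ c, ∑ a, ∑ b, q a b c :=
      calc ∑ a, ∑ b, ∑ c, q a b c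
          = ∑ a, ∑ c, ∑ b, q a b c :=
            Finset.sum_congr rfl fun a _ => Finset.sum_comm
        _ = ∑ c, ∑ a, ∑ b, q a b c := Finset.sum_comm
    rw [reorder]
    have inner : ∀ c, ∑ a, ∑ b, q a b c ≤ prob μ C c := by
      intro c
      by_cases h0 : prob μ C c = 0
      · simp [hq, h0]
      · refine le_of_eq ?_
        have hbsum : ∀ a, ∑ b, q a b c = prob μ (fun ω => (A ω, C ω)) (a, c) := by
          intro a
          simp only [hq, if_neg h0]
          rw [← Finset.sum_div, ← Finset.mul_sum, ← mCb c, mul_div_assoc,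
            div_self h0, mul_one]
        rw [Finset.sum_congr rfl fun a _ => hbsum a, ← mCa c]
    calc ∑ c, ∑ a, ∑ b, q a b c ≤ ∑ c, prob μ C c :=
          Finset.sum_le_sum fun c _ => inner c
      _ = 1 := (sum_prob μ C).trans hμ.2
  -- expansion of the four entropies as triple sums
  have eT : entH μ (fun ω => ((A ω, B ω), C ω))
      = ∑ a, ∑ b, ∑ c, -(prob μ (fun ω => (A ω, B ω, C ω)) (a, b, c)
          * Real.log (prob μ (fun ω => (A ω, B ω, C ω)) (a, b, c))) := by
    have hf : Function.Injective (fun p : α × β × γ => ((p.1, p.2.1), p.2.2)) := by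
      rintro ⟨a, b, c⟩ ⟨a', b', c'⟩ hh
      simp only [Prod.mk.injEq] at hh
      simp [hh.1.1, hh.1.2, hh.2]
    rw [show (fun ω => ((A ω, B ω), C ω))
        = (fun ω => (fun p : α × β × γ => ((p.1, p.2.1), p.2.2)) (A ω, B ω, C ω))
        from rfl]
    rw [entH_comp_inj μ hf (fun ω => (A ω, B ω, C ω)), entH_triple_expand]
  have e1 : entH μ (fun ω => (A ω, C ω))
      = ∑ a, ∑ b, ∑ c, -(prob μ (fun ω => (A ω, B ω, C ω)) (a, b, c)
          * Real.log (prob μ (fun ω => (A ω, C ω)) (a, c))) := by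
    rw [entH_pair_expand μ A C]
    refine Finset.sum_congr rfl fun a _ => ?_
    calc ∑ c, -(prob μ (fun ω => (A ω, C ω)) (a, c)
            * Real.log (prob μ (fun ω => (A ω, C ω)) (a, c)))
        = ∑ c, ∑ b, -(prob μ (fun ω => (A ω, B ω, C ω)) (a, b, c)
            * Real.log (prob μ (fun ω => (A ω, C ω)) (a, c))) := by
          refine Finset.sum_congr rfl fun c _ => ?_
          rw [pull_neg_mul, ← mAC]
      _ = ∑ b, ∑ c, -(prob μ (fun ω => (A ω, B ω, C ω)) (a, b, c)
            * Real.log (prob μ (fun ω => (A ω, C ω)) (a, c))) := Finset.sum_comm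
  have e2 : entH μ (fun ω => (B ω, C ω))
      = ∑ a, ∑ b, ∑ c, -(prob μ (fun ω => (A ω, B ω, C ω)) (a, b, c)
          * Real.log (prob μ (fun ω => (B ω, C ω)) (b, c))) := by
    rw [entH_pair_expand μ B C]
    calc ∑ b, ∑ c, -(prob μ (fun ω => (B ω, C ω)) (b, c)
            * Real.log (prob μ (fun ω => (B ω, C ω)) (b, c)))
        = ∑ b, ∑ c, ∑ a, -(prob μ (fun ω => (A ω, B ω, C ω)) (a, b, c)
            * Real.log (prob μ (fun ω => (B ω, C ω)) (b, c))) := by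
          refine Finset.sum_congr rfl fun b _ => Finset.sum_congr rfl fun c _ => ?_
          rw [pull_neg_mul, ← mBC]
      _ = ∑ b, ∑ a, ∑ c, -(prob μ (fun ω => (A ω, B ω, C ω)) (a, b, c)
            * Real.log (prob μ (fun ω => (B ω, C ω)) (b, c))) :=
          Finset.sum_congr rfl fun b _ => Finset.sum_comm
      _ = ∑ a, ∑ b, ∑ c, -(prob μ (fun ω => (A ω, B ω, C ω)) (a, b, c)
            * Real.log (prob μ (fun ω => (B ω, C ω)) (b, c))) := Finset.sum_comm
  have e4 : entH μ C
      = ∑ a, ∑ b, ∑ c, -(prob μ (fun ω => (A ω, B ω, C ω)) (a, b, c)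
          * Real.log (prob μ C c)) := by
    have h0 : entH μ C = ∑ c, -(prob μ C c * Real.log (prob μ C c)) := rfl
    rw [h0]
    calc ∑ c, -(prob μ C c * Real.log (prob μ C c))
        = ∑ c, ∑ a, -(prob μ (fun ω => (A ω, C ω)) (a, c) * Real.log (prob μ C c)) := by
          refine Finset.sum_congr rfl fun c _ => ?_
          rw [pull_neg_mul, ← mCa]
      _ = ∑ c, ∑ a, ∑ b, -(prob μ (fun ω => (A ω, B ω, C ω)) (a, b, c)
            * Real.log (prob μ C c)) := by
          refine Finset.sum_congr rfl fun c _ => Finset.sum_congr rfl fun a _ => ?_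
          rw [pull_neg_mul, ← mAC]
      _ = ∑ a, ∑ c, ∑ b, -(prob μ (fun ω => (A ω, B ω, C ω)) (a, b, c)
            * Real.log (prob μ C c)) := Finset.sum_comm
      _ = ∑ a, ∑ b, ∑ c, -(prob μ (fun ω => (A ω, B ω, C ω)) (a, b, c)
            * Real.log (prob μ C c)) :=
          Finset.sum_congr rfl fun a _ => Finset.sum_comm
  have expand : condMutInfo μ A B C
      = ∑ a, ∑ b, ∑ c, (-(prob μ (fun ω => (A ω, B ω, C ω)) (a, b, c)
            * Real.log (prob μ (fun ω => (A ω, C ω)) (a, c)))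
          + -(prob μ (fun ω => (A ω, B ω, C ω)) (a, b, c)
            * Real.log (prob μ (fun ω => (B ω, C ω)) (b, c)))
          + prob μ (fun ω => (A ω, B ω, C ω)) (a, b, c)
            * Real.log (prob μ (fun ω => (A ω, B ω, C ω)) (a, b, c))
          + prob μ (fun ω => (A ω, B ω, C ω)) (a, b, c)
            * Real.log (prob μ C c)) := by
    simp only [condMutInfo, condH]
    rw [eT, e1, e2, e4]
    simp only [Finset.sum_add_distrib, Finset.sum_neg_distrib]
    ring
  have key : ∀ a b c,
      prob μ (fun ω => (A ω, B ω, C ω)) (a, b, c) - q a b c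
      ≤ -(prob μ (fun ω => (A ω, B ω, C ω)) (a, b, c)
            * Real.log (prob μ (fun ω => (A ω, C ω)) (a, c)))
          + -(prob μ (fun ω => (A ω, B ω, C ω)) (a, b, c)
            * Real.log (prob μ (fun ω => (B ω, C ω)) (b, c)))
          + prob μ (fun ω => (A ω, B ω, C ω)) (a, b, c)
            * Real.log (prob μ (fun ω => (A ω, B ω, C ω)) (a, b, c))
          + prob μ (fun ω => (A ω, B ω, C ω)) (a, b, c)
            * Real.log (prob μ C c) := by
    intro a b c
    by_cases h0 : prob μ (fun ω => (A ω, B ω, C ω)) (a, b, c) = 0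
    · simp only [h0, zero_mul, neg_zero, zero_sub, add_zero, zero_add]
      linarith [hq0 a b c]
    have hP : 0 < prob μ (fun ω => (A ω, B ω, C ω)) (a, b, c) :=
      lt_of_le_of_ne (hp a b c) (Ne.symm h0)
    have hAC : 0 < prob μ (fun ω => (A ω, C ω)) (a, c) :=
      lt_of_lt_of_le hP (prob_le_of_marginal
        (g := fun b' => prob μ (fun ω => (A ω, B ω, C ω)) (a, b', c))
        (fun b' _ => hp a b' c) (Finset.mem_univ b) (mAC a c))
    have hBC : 0 < prob μ (fun ω => (B ω, C ω)) (b, c) :=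
      lt_of_lt_of_le hP (prob_le_of_marginal
        (g := fun a' => prob μ (fun ω => (A ω, B ω, C ω)) (a', b, c))
        (fun a' _ => hp a' b c) (Finset.mem_univ a) (mBC b c))
    have hC : 0 < prob μ C c :=
      lt_of_lt_of_le hAC (prob_le_of_marginal
        (g := fun a' => prob μ (fun ω => (A ω, C ω)) (a', c))
        (fun a' _ => hpAC a' c) (Finset.mem_univ a) (mCa c))
    have hqv : q a b c = prob μ (fun ω => (A ω, C ω)) (a, c)
        * prob μ (fun ω => (B ω, C ω)) (b, c) / prob μ C c := by
      rw [hq]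
      dsimp only
      rw [if_neg hC.ne']
    have hr : 0 < prob μ (fun ω => (A ω, C ω)) (a, c)
        * prob μ (fun ω => (B ω, C ω)) (b, c)
        / (prob μ (fun ω => (A ω, B ω, C ω)) (a, b, c) * prob μ C c) := by positivity
    have hlr := Real.log_le_sub_one_of_pos hr
    have hlogr : Real.log (prob μ (fun ω => (A ω, C ω)) (a, c)
          * prob μ (fun ω => (B ω, C ω)) (b, c)
          / (prob μ (fun ω => (A ω, B ω, C ω)) (a, b, c) * prob μ C c))
        = Real.log (prob μ (fun ω => (A ω, C ω)) (a, c))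
          + Real.log (prob μ (fun ω => (B ω, C ω)) (b, c))
          - Real.log (prob μ (fun ω => (A ω, B ω, C ω)) (a, b, c))
          - Real.log (prob μ C c) := by
      rw [Real.log_div (by positivity) (by positivity),
        Real.log_mul hAC.ne' hBC.ne', Real.log_mul hP.ne' hC.ne']
      ring
    rw [hlogr] at hlr
    have h2 := mul_le_mul_of_nonneg_left hlr hP.le
    have h3 : prob μ (fun ω => (A ω, B ω, C ω)) (a, b, c)
        * (Real.log (prob μ (fun ω => (A ω, C ω)) (a, c))
          + Real.log (prob μ (fun ω => (B ω, C ω)) (b, c))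
          - Real.log (prob μ (fun ω => (A ω, B ω, C ω)) (a, b, c))
          - Real.log (prob μ C c))
        = prob μ (fun ω => (A ω, B ω, C ω)) (a, b, c)
            * Real.log (prob μ (fun ω => (A ω, C ω)) (a, c))
          + prob μ (fun ω => (A ω, B ω, C ω)) (a, b, c)
            * Real.log (prob μ (fun ω => (B ω, C ω)) (b, c))
          - prob μ (fun ω => (A ω, B ω, C ω)) (a, b, c)
            * Real.log (prob μ (fun ω => (A ω, B ω, C ω)) (a, b, c))
          - prob μ (fun ω => (A ω, B ω, C ω)) (a, b, c)
            * Real.log (prob μ C c) := by ring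
    have h4 : prob μ (fun ω => (A ω, B ω, C ω)) (a, b, c)
        * (prob μ (fun ω => (A ω, C ω)) (a, c)
          * prob μ (fun ω => (B ω, C ω)) (b, c)
          / (prob μ (fun ω => (A ω, B ω, C ω)) (a, b, c) * prob μ C c) - 1)
        = prob μ (fun ω => (A ω, C ω)) (a, c)
          * prob μ (fun ω => (B ω, C ω)) (b, c) / prob μ C c
          - prob μ (fun ω => (A ω, B ω, C ω)) (a, b, c) := by
      field_simp
    rw [h3, h4] at h2
    rw [hqv]
    linarith [h2]
  have step : ∑ a, ∑ b, ∑ c, (prob μ (fun ω => (A ω, B ω, C ω)) (a, b, c) - q a b c)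
      ≤ condMutInfo μ A B C := by
    rw [expand]
    exact Finset.sum_le_sum fun a _ => Finset.sum_le_sum fun b _ =>
      Finset.sum_le_sum fun c _ => key a b c
  have split : ∑ a, ∑ b, ∑ c, (prob μ (fun ω => (A ω, B ω, C ω)) (a, b, c) - q a b c)
      = 1 - ∑ a, ∑ b, ∑ c, q a b c := by
    simp only [Finset.sum_sub_distrib]
    rw [sum_triple_prob μ hμ A B C]
  linarith

end Lemmas4


/-- For a physically-degraded chain `X → (Y₁,S₁) → (Y₂,S₂)` with
`X` independent of `(S₁,S₂)`:
`[I(X;Y₁|S₁) − I(X;Y₂|S₂)]⁺ + H(Y₁|Y₂,S₂,X) = H(Y₁,S₁|Y₂,S₂) − H(S₁|Y₁,Y₂,S₂,X)`. -/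
theorem degraded_single_message_rate_identity
    {Ω 𝓧 𝓨₁ 𝓢₁ 𝓨₂ 𝓢₂ : Type*} [Fintype Ω]
    [Fintype 𝓧] [DecidableEq 𝓧]
    [Fintype 𝓨₁] [DecidableEq 𝓨₁] [Fintype 𝓢₁] [DecidableEq 𝓢₁]
    [Fintype 𝓨₂] [DecidableEq 𝓨₂] [Fintype 𝓢₂] [DecidableEq 𝓢₂]
    (μ : Ω → ℝ) (hμ : IsPMF μ)
    (X : Ω → 𝓧) (Y₁ : Ω → 𝓨₁) (S₁ : Ω → 𝓢₁) (Y₂ : Ω → 𝓨₂) (S₂ : Ω → 𝓢₂)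
    (hMarkov : MarkovChain μ X (fun ω => (Y₁ ω, S₁ ω)) (fun ω => (Y₂ ω, S₂ ω)))
    (hInd : IndepRV μ X (fun ω => (S₁ ω, S₂ ω))) :
    max (condMutInfo μ X Y₁ S₁ - condMutInfo μ X Y₂ S₂) 0
      + condH μ Y₁ (fun ω => (Y₂ ω, S₂ ω, X ω))
    = condH μ (fun ω => (Y₁ ω, S₁ ω)) (fun ω => (Y₂ ω, S₂ ω))
      - condH μ S₁ (fun ω => (Y₁ ω, Y₂ ω, S₂ ω, X ω)) := by
  have E1 : entH μ (fun ω => (X ω, S₁ ω)) = entH μ X + entH μ S₁ :=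
    entH_pair_of_indep μ hμ X S₁ (indep_fst μ X S₁ S₂ hInd)
  have E2 : entH μ (fun ω => (X ω, S₂ ω)) = entH μ X + entH μ S₂ :=
    entH_pair_of_indep μ hμ X S₂ (indep_snd μ X S₁ S₂ hInd)
  have E3 : entH μ (fun ω => (X ω, (Y₁ ω, S₁ ω), (Y₂ ω, S₂ ω)))
      = entH μ (fun ω => (X ω, Y₁ ω, S₁ ω))
        + entH μ (fun ω => ((Y₁ ω, S₁ ω), Y₂ ω, S₂ ω))
        - entH μ (fun ω => (Y₁ ω, S₁ ω)) :=
    entH_markov μ hμ X (fun ω => (Y₁ ω, S₁ ω)) (fun ω => (Y₂ ω, S₂ ω)) hMarkov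
  have hf1 : Function.Injective
      (fun p : 𝓧 × 𝓨₁ × 𝓢₁ => ((p.1, p.2.1), p.2.2)) := by
    rintro ⟨a, b, c⟩ ⟨a', b', c'⟩ hh
    simp only [Prod.mk.injEq] at hh
    simp [hh.1.1, hh.1.2, hh.2]
  have R1 : entH μ (fun ω => ((X ω, Y₁ ω), S₁ ω))
      = entH μ (fun ω => (X ω, Y₁ ω, S₁ ω)) :=
    entH_comp_inj μ hf1 (fun ω => (X ω, Y₁ ω, S₁ ω))
  have hf2 : Function.Injective
      (fun p : 𝓧 × 𝓨₂ × 𝓢₂ => ((p.1, p.2.1), p.2.2)) := by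
    rintro ⟨a, b, c⟩ ⟨a', b', c'⟩ hh
    simp only [Prod.mk.injEq] at hh
    simp [hh.1.1, hh.1.2, hh.2]
  have R2 : entH μ (fun ω => ((X ω, Y₂ ω), S₂ ω))
      = entH μ (fun ω => (X ω, Y₂ ω, S₂ ω)) :=
    entH_comp_inj μ hf2 (fun ω => (X ω, Y₂ ω, S₂ ω))
  have hf4 : Function.Injective
      (fun p : 𝓧 × 𝓨₂ × 𝓢₂ => (p.2.1, p.2.2, p.1)) := by
    rintro ⟨a, b, c⟩ ⟨a', b', c'⟩ hh
    simp only [Prod.mk.injEq] at hh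
    simp [hh.1, hh.2.1, hh.2.2]
  have R4 : entH μ (fun ω => (Y₂ ω, S₂ ω, X ω))
      = entH μ (fun ω => (X ω, Y₂ ω, S₂ ω)) :=
    entH_comp_inj μ hf4 (fun ω => (X ω, Y₂ ω, S₂ ω))
  have hf6 : Function.Injective
      (fun p : 𝓧 × (𝓨₁ × 𝓢₁) × 𝓨₂ × 𝓢₂ =>
        (p.2.1.2, p.2.1.1, p.2.2.1, p.2.2.2, p.1)) := by
    rintro ⟨a, ⟨b, c⟩, d, e⟩ ⟨a', ⟨b', c'⟩, d', e'⟩ hh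
    simp only [Prod.mk.injEq] at hh
    simp [hh.1, hh.2.1, hh.2.2.1, hh.2.2.2.1, hh.2.2.2.2]
  have R6 : entH μ (fun ω => (S₁ ω, Y₁ ω, Y₂ ω, S₂ ω, X ω))
      = entH μ (fun ω => (X ω, (Y₁ ω, S₁ ω), (Y₂ ω, S₂ ω))) :=
    entH_comp_inj μ hf6 (fun ω => (X ω, (Y₁ ω, S₁ ω), (Y₂ ω, S₂ ω)))
  have hf8 : Function.Injective
      (fun p : 𝓧 × (𝓨₁ × 𝓢₁) × 𝓨₂ × 𝓢₂ => ((p.1, p.2.1), p.2.2)) := by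
    rintro ⟨a, ⟨b, c⟩, d, e⟩ ⟨a', ⟨b', c'⟩, d', e'⟩ hh
    simp only [Prod.mk.injEq] at hh
    simp [hh.1.1, hh.1.2, hh.2]
  have R8 : entH μ (fun ω => ((X ω, Y₁ ω, S₁ ω), Y₂ ω, S₂ ω))
      = entH μ (fun ω => (X ω, (Y₁ ω, S₁ ω), (Y₂ ω, S₂ ω))) :=
    entH_comp_inj μ hf8 (fun ω => (X ω, (Y₁ ω, S₁ ω), (Y₂ ω, S₂ ω)))
  have hNN : 0 ≤ condMutInfo μ X (fun ω => (Y₁ ω, S₁ ω)) (fun ω => (Y₂ ω, S₂ ω)) :=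
    condMutInfo_nonneg μ hμ X (fun ω => (Y₁ ω, S₁ ω)) (fun ω => (Y₂ ω, S₂ ω))
  simp only [condMutInfo, condH] at hNN
  have hD0 : 0 ≤ condMutInfo μ X Y₁ S₁ - condMutInfo μ X Y₂ S₂ := by
    simp only [condMutInfo, condH]
    linarith [hNN, E1, E2, E3, R1, R2, R8]
  rw [max_eq_left hD0]
  simp only [condMutInfo, condH]
  linarith [E1, E2, E3, R1, R2, R4, R6, R8]
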